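/- arXiv:2310.07964 — 5 statements merged into one kernel-verified Lean document; each statement's English description precedes it below -/
import Mathlib

section
/- Assume the Szemerédi–Trotter theorem: there is a constant C such that for any finite point set P ⊆ ℝ² and finite set L of lines in ℝ², the number of incidences I(P,L) ≤ C(|P|^{2/3}|L|^{2/3} + |P| + |L|). Then there is a constant c > 0 such that for every finite set A ⊆ ℝ with |A| ≥ 2, max(|A+A|, |A·A|) ≥ c·|A|^{5/4}. -/
set_option maxHeartbeats 1000000

open Finset Pointwise

private def eline (a a' : ℝ) : Set (ℝ × ℝ) :=
  {q : ℝ × ℝ | a * q.1 + (-1) * q.2 = a * a'}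

private lemma eline_inj {a a' b b' : ℝ} (_ha : a ≠ 0) (hb : b ≠ 0)
    (h : eline a a' = eline b b') : a = b ∧ a' = b' := by
  have h1 : ((a', 0) : ℝ × ℝ) ∈ eline a a' := by simp [eline]
  have h2 : ((a' + 1, a) : ℝ × ℝ) ∈ eline a a' := by simp [eline]; ring
  rw [h] at h1 h2
  simp only [eline, Set.mem_setOf_eq] at h1 h2
  have ha' : a' = b' := by
    have : b * a' = b * b' := by linarith
    exact mul_left_cancel₀ hb this
  exact ⟨by nlinarith [h1, h2], ha'⟩

theorem elekes_sum_product (C : ℝ)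
    (hST : ∀ (P : Set (ℝ × ℝ)) (L : Set (Set (ℝ × ℝ))), P.Finite → L.Finite →
      (∀ l ∈ L, ∃ a b c : ℝ, (a, b) ≠ (0, 0) ∧ l = {q : ℝ × ℝ | a * q.1 + b * q.2 = c}) →
      ({x : (ℝ × ℝ) × Set (ℝ × ℝ) | x.1 ∈ P ∧ x.2 ∈ L ∧ x.1 ∈ x.2}.ncard : ℝ) ≤
        C * ((P.ncard : ℝ) ^ ((2 : ℝ) / 3) * (L.ncard : ℝ) ^ ((2 : ℝ) / 3)
          + P.ncard + L.ncard)) :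
    ∃ c : ℝ, 0 < c ∧ ∀ A : Finset ℝ, 2 ≤ A.card →
      c * (A.card : ℝ) ^ ((5 : ℝ) / 4) ≤ max ((A + A).card : ℝ) ((A * A).card : ℝ) := by
  classical
  -- Step 1: C is positive
  have hCpos : 0 < C := by
    have h00 : ((0, 0) : ℝ × ℝ) ∈ ({q : ℝ × ℝ | 1 * q.1 + 0 * q.2 = 0} : Set (ℝ × ℝ)) := by
      simp
    have key := hST {((0 : ℝ), (0 : ℝ))} {{q : ℝ × ℝ | 1 * q.1 + 0 * q.2 = 0}}
      (Set.finite_singleton _) (Set.finite_singleton _)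
      (by
        intro l hl
        rw [Set.mem_singleton_iff] at hl
        subst hl
        exact ⟨1, 0, 0, by norm_num [Prod.ext_iff], rfl⟩)
    have hset : {x : (ℝ × ℝ) × Set (ℝ × ℝ) |
        x.1 ∈ ({((0 : ℝ), (0 : ℝ))} : Set (ℝ × ℝ)) ∧
        x.2 ∈ ({{q : ℝ × ℝ | 1 * q.1 + 0 * q.2 = 0}} : Set (Set (ℝ × ℝ))) ∧ x.1 ∈ x.2}
        = {(((0 : ℝ), (0 : ℝ)), ({q : ℝ × ℝ | 1 * q.1 + 0 * q.2 = 0} : Set (ℝ × ℝ)))} := by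
      ext ⟨p, m⟩
      simp only [Set.mem_setOf_eq, Set.mem_singleton_iff, Prod.mk.injEq]
      constructor
      · rintro ⟨hp, hm, _⟩; exact ⟨hp, hm⟩
      · rintro ⟨hp, hm⟩; subst hp; subst hm; exact ⟨rfl, rfl, h00⟩
    rw [hset] at key
    simp only [Set.ncard_singleton, Nat.cast_one, Real.one_rpow] at key
    linarith
  refine ⟨((6 * C) ^ ((3 : ℝ) / 4))⁻¹, by positivity, ?_⟩
  intro A hA
  set n : ℝ := (A.card : ℝ) with hn
  have hn2 : (2 : ℝ) ≤ n := by rw [hn]; exact_mod_cast hA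
  have hn0 : (0 : ℝ) < n := by linarith
  have hAne : A.Nonempty := Finset.card_pos.mp (by omega)
  set k1 : ℝ := ((A + A).card : ℝ) with hk1def
  set k2 : ℝ := ((A * A).card : ℝ) with hk2def
  set s : ℝ := max k1 k2 with hsdef
  have hsmax : s = max k1 k2 := hsdef
  have hk1 : n ≤ k1 := by
    rw [hn, hk1def]; exact_mod_cast Finset.card_le_card_add_left hAne
  have hns : n ≤ s := le_trans hk1 (le_max_left _ _)
  have hs0 : (0 : ℝ) < s := lt_of_lt_of_le hn0 hns
  have hk1le : k1 ≤ n * n := by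
    rw [hn, hk1def]; exact_mod_cast Finset.card_add_le
  have hk2le : k2 ≤ n * n := by
    rw [hn, hk2def]; exact_mod_cast Finset.card_mul_le
  have hsle : s ≤ n * n := max_le hk1le hk2le
  have hk10 : (0 : ℝ) ≤ k1 := by rw [hk1def]; exact Nat.cast_nonneg _
  have hk20 : (0 : ℝ) ≤ k2 := by rw [hk2def]; exact Nat.cast_nonneg _
  have hk1s : k1 ≤ s := le_max_left _ _
  have hk2s : k2 ≤ s := le_max_right _ _
  clear_value n k1 k2 s
  -- point set, line set
  set A0 : Finset ℝ := A.erase 0 with hA0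
  have hA0c : A.card - 1 ≤ A0.card := Finset.pred_card_le_card_erase
  have hA0le : A0.card ≤ A.card := Finset.card_le_card (Finset.erase_subset _ _)
  set Pfin : Finset (ℝ × ℝ) := (A + A) ×ˢ (A * A) with hPfin
  set Lfin : Finset (Set (ℝ × ℝ)) := (A0 ×ˢ A).image (fun p => eline p.1 p.2) with hLfin
  have hinjL : Set.InjOn (fun p : ℝ × ℝ => eline p.1 p.2) ↑(A0 ×ˢ A) := by
    rintro ⟨a, a'⟩ h1 ⟨b, b'⟩ h2 h
    simp only [Finset.coe_product, Set.mem_prod, Finset.mem_coe, hA0, Finset.mem_erase] at h1 h2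
    obtain ⟨e1, e2⟩ := eline_inj h1.1.1 h2.1.1 h
    simp only [Prod.mk.injEq]
    exact ⟨e1, e2⟩
  have hLcard : Lfin.card = A0.card * A.card := by
    rw [hLfin, Finset.card_image_of_injOn hinjL, Finset.card_product]
  -- incidence set
  set I : Set ((ℝ × ℝ) × Set (ℝ × ℝ)) :=
    {x : (ℝ × ℝ) × Set (ℝ × ℝ) | x.1 ∈ (↑Pfin : Set (ℝ × ℝ)) ∧
      x.2 ∈ (↑Lfin : Set (Set (ℝ × ℝ))) ∧ x.1 ∈ x.2} with hI
  have hIsub : I ⊆ ↑(Pfin ×ˢ Lfin) := by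
    rintro ⟨p, l⟩ ⟨h1, h2, _⟩
    simp only [Finset.coe_product, Set.mem_prod]
    exact ⟨h1, h2⟩
  have hIfin : I.Finite := Set.Finite.subset (Pfin ×ˢ Lfin).finite_toSet hIsub
  -- lower bound on incidences
  set D : Finset ((ℝ × ℝ) × ℝ) := (A0 ×ˢ A) ×ˢ A with hD
  set f : (ℝ × ℝ) × ℝ → (ℝ × ℝ) × Set (ℝ × ℝ) :=
    fun x => ((x.1.2 + x.2, x.1.1 * x.2), eline x.1.1 x.1.2) with hf
  have hfmaps : ∀ x ∈ D, f x ∈ I := by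
    rintro ⟨⟨a, a'⟩, b⟩ hx
    simp only [hD, Finset.mem_product] at hx
    obtain ⟨⟨ha, ha'⟩, hb⟩ := hx
    refine ⟨?_, ?_, ?_⟩
    · simp only [hPfin, Finset.coe_product, Set.mem_prod, Finset.mem_coe]
      exact ⟨Finset.add_mem_add ha' hb, Finset.mul_mem_mul (Finset.mem_of_mem_erase ha) hb⟩
    · simp only [hLfin, Finset.coe_image, Set.mem_image, Finset.mem_coe]
      exact ⟨(a, a'), Finset.mem_product.mpr ⟨ha, ha'⟩, rfl⟩
    · show a * (a' + b) + (-1) * (a * b) = a * a'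
      ring
  have hfinj : Set.InjOn f ↑D := by
    rintro ⟨⟨a, a'⟩, b⟩ h1 ⟨⟨c, c'⟩, d⟩ h2 h
    simp only [hD, Finset.coe_product, Set.mem_prod, Finset.mem_coe, hA0,
      Finset.mem_erase] at h1 h2
    simp only [hf, Prod.mk.injEq] at h
    obtain ⟨⟨hco, _⟩, hel⟩ := h
    obtain ⟨e1, e2⟩ := eline_inj h1.1.1.1 h2.1.1.1 hel
    subst e1; subst e2
    have : b = d := by linarith
    simp [this]
  have hlow : ((D.card : ℕ) : ℝ) ≤ (I.ncard : ℝ) := by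
    have hEcard : (D.image f).card = D.card := Finset.card_image_of_injOn hfinj
    have hEsub : ↑(D.image f) ⊆ I := by
      intro x hx
      simp only [Finset.coe_image, Set.mem_image, Finset.mem_coe] at hx
      obtain ⟨y, hy, rfl⟩ := hx
      exact hfmaps y hy
    have h3 := Set.ncard_le_ncard hEsub hIfin
    rw [Set.ncard_coe_finset, hEcard] at h3
    exact_mod_cast h3
  -- upper bound via hST
  have hlines : ∀ l ∈ (↑Lfin : Set (Set (ℝ × ℝ))), ∃ a b c : ℝ, (a, b) ≠ (0, 0) ∧
      l = {q : ℝ × ℝ | a * q.1 + b * q.2 = c} := by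
    intro l hl
    simp only [hLfin, Finset.coe_image, Set.mem_image, Finset.mem_coe] at hl
    obtain ⟨⟨a, a'⟩, _, rfl⟩ := hl
    exact ⟨a, -1, a * a', by norm_num [Prod.ext_iff], rfl⟩
  have hup := hST ↑Pfin ↑Lfin Pfin.finite_toSet Lfin.finite_toSet hlines
  rw [Set.ncard_coe_finset, Set.ncard_coe_finset] at hup
  -- cast cardinalities
  have hPcard : ((Pfin.card : ℕ) : ℝ) = k1 * k2 := by
    rw [hk1def, hk2def, hPfin, Finset.card_product]
    push_cast
    ring
  have hLc : ((Lfin.card : ℕ) : ℝ) ≤ n * n := by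
    rw [hLcard, hn]
    push_cast
    have h1 : (A0.card : ℝ) ≤ (A.card : ℝ) := by exact_mod_cast hA0le
    nlinarith [Nat.cast_nonneg (α := ℝ) A0.card, Nat.cast_nonneg (α := ℝ) A.card]
  have hDcard : (n - 1) * n * n ≤ ((D.card : ℕ) : ℝ) := by
    rw [hn, hD, Finset.card_product, Finset.card_product]
    have h1le : 1 ≤ A.card := by omega
    have h1 : ((A.card : ℝ) - 1) ≤ (A0.card : ℝ) := by
      have h2 : ((A.card - 1 : ℕ) : ℝ) ≤ (A0.card : ℝ) := by exact_mod_cast hA0c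
      rwa [Nat.cast_sub h1le, Nat.cast_one] at h2
    push_cast
    exact mul_le_mul_of_nonneg_right
      (mul_le_mul_of_nonneg_right h1 (Nat.cast_nonneg _)) (Nat.cast_nonneg _)
  -- rpow estimates
  have hss : s * s ≤ s ^ ((4 : ℝ) / 3) * n ^ ((4 : ℝ) / 3) := by
    have e1 : s * s = s ^ ((4 : ℝ) / 3) * s ^ ((2 : ℝ) / 3) := by
      rw [← Real.rpow_add hs0, show (4:ℝ)/3 + 2/3 = ((2:ℕ):ℝ) by norm_num,
        Real.rpow_natCast]
      ring
    have e2 : s ^ ((2 : ℝ) / 3) ≤ n ^ ((4 : ℝ) / 3) := by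
      calc s ^ ((2 : ℝ) / 3) ≤ (n * n) ^ ((2 : ℝ) / 3) :=
            Real.rpow_le_rpow hs0.le hsle (by norm_num)
        _ = n ^ ((4 : ℝ) / 3) := by
            rw [Real.mul_rpow hn0.le hn0.le, ← Real.rpow_add hn0]; norm_num
    rw [e1]
    exact mul_le_mul_of_nonneg_left e2 (by positivity)
  have hmulss : ((Pfin.card : ℕ) : ℝ) ≤ s * s := by
    rw [hPcard]
    nlinarith
  have hterm1 : ((Pfin.card : ℕ) : ℝ) ^ ((2 : ℝ) / 3) * ((Lfin.card : ℕ) : ℝ) ^ ((2 : ℝ) / 3)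
      ≤ s ^ ((4 : ℝ) / 3) * n ^ ((4 : ℝ) / 3) := by
    have hp23 : ((Pfin.card : ℕ) : ℝ) ^ ((2 : ℝ) / 3) ≤ s ^ ((4 : ℝ) / 3) := by
      calc ((Pfin.card : ℕ) : ℝ) ^ ((2 : ℝ) / 3) ≤ (s * s) ^ ((2 : ℝ) / 3) :=
            Real.rpow_le_rpow (Nat.cast_nonneg _) hmulss (by norm_num)
        _ = s ^ ((4 : ℝ) / 3) := by
            rw [Real.mul_rpow hs0.le hs0.le, ← Real.rpow_add hs0]; norm_num
    have hl23 : ((Lfin.card : ℕ) : ℝ) ^ ((2 : ℝ) / 3) ≤ n ^ ((4 : ℝ) / 3) := by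
      calc ((Lfin.card : ℕ) : ℝ) ^ ((2 : ℝ) / 3) ≤ (n * n) ^ ((2 : ℝ) / 3) :=
            Real.rpow_le_rpow (Nat.cast_nonneg _) hLc (by norm_num)
        _ = n ^ ((4 : ℝ) / 3) := by
            rw [Real.mul_rpow hn0.le hn0.le, ← Real.rpow_add hn0]; norm_num
    exact mul_le_mul hp23 hl23 (Real.rpow_nonneg (Nat.cast_nonneg _) _) (by positivity)
  have hterm2 : ((Pfin.card : ℕ) : ℝ) ≤ s ^ ((4 : ℝ) / 3) * n ^ ((4 : ℝ) / 3) :=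
    le_trans hmulss hss
  have hterm3 : ((Lfin.card : ℕ) : ℝ) ≤ s ^ ((4 : ℝ) / 3) * n ^ ((4 : ℝ) / 3) := by
    refine le_trans (le_trans hLc ?_) hss
    nlinarith
  -- combine
  have hmain : (n - 1) * n * n ≤ 3 * C * (s ^ ((4 : ℝ) / 3) * n ^ ((4 : ℝ) / 3)) := by
    have h1 : (n - 1) * n * n ≤ (I.ncard : ℝ) := le_trans hDcard hlow
    have h2 : (I.ncard : ℝ) ≤ C * (3 * (s ^ ((4 : ℝ) / 3) * n ^ ((4 : ℝ) / 3))) := by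
      refine le_trans hup ?_
      have h3 := add_le_add (add_le_add hterm1 hterm2) hterm3
      nlinarith
    nlinarith
  have hcube : n ^ ((5 : ℝ) / 3) * n ^ ((4 : ℝ) / 3) ≤
      6 * C * s ^ ((4 : ℝ) / 3) * n ^ ((4 : ℝ) / 3) := by
    have e : n ^ ((5 : ℝ) / 3) * n ^ ((4 : ℝ) / 3) = n * n * n := by
      rw [← Real.rpow_add hn0, show (5:ℝ)/3 + 4/3 = ((3:ℕ):ℝ) by norm_num,
        Real.rpow_natCast]
      ring
    rw [e]
    nlinarith
  have hfrac : n ^ ((5 : ℝ) / 3) ≤ 6 * C * s ^ ((4 : ℝ) / 3) := by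
    have hpos : (0 : ℝ) < n ^ ((4 : ℝ) / 3) := Real.rpow_pos_of_pos hn0 _
    exact le_of_mul_le_mul_right hcube hpos
  have h6C : (0 : ℝ) < 6 * C := by linarith
  have hdiv : n ^ ((5 : ℝ) / 3) / (6 * C) ≤ s ^ ((4 : ℝ) / 3) := by
    rw [div_le_iff₀ h6C]
    linarith [hfrac]
  have hfinal : (n ^ ((5 : ℝ) / 3) / (6 * C)) ^ ((3 : ℝ) / 4) ≤ s := by
    calc (n ^ ((5 : ℝ) / 3) / (6 * C)) ^ ((3 : ℝ) / 4)
        ≤ (s ^ ((4 : ℝ) / 3)) ^ ((3 : ℝ) / 4) :=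
          Real.rpow_le_rpow (by positivity) hdiv (by norm_num)
      _ = s := by
          rw [← Real.rpow_mul hs0.le]
          norm_num
  have hLHS : (n ^ ((5 : ℝ) / 3) / (6 * C)) ^ ((3 : ℝ) / 4)
      = ((6 * C) ^ ((3 : ℝ) / 4))⁻¹ * n ^ ((5 : ℝ) / 4) := by
    rw [Real.div_rpow (by positivity) h6C.le, ← Real.rpow_mul hn0.le]
    norm_num
    ring
  rw [hLHS] at hfinal
  exact hfinal
end

section
/- Let p be a prime with p ≡ 3 (mod 4), q = p³, and for u ∈ (ℤ/qℤ)² and ρ ∈ ℤ/qℤ, let C_ρ(u) := {v ∈ (ℤ/qℤ)² : ‖v − u‖ = ρ} where ‖(x,y)‖ := x² + y². Then |C_ρ(u)| = p² if ρ = 0; |C_ρ(u)| = p³ + p² if ρ ∈ p²·(ℤ/qℤ)^× or ρ is a unit; and |C_ρ(u)| = 0 if ρ ∈ p·(ℤ/qℤ)^× (i.e., p ∣ ρ but p² ∤ ρ). -/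
/-!
Multiplication by `a + b i` with `a² + b² = e` maps the circle `x² + y² = ρ` bijectively onto the
circle of radius `e ρ`, and every unit `e` of `ℤ/p³` is such a sum of two squares (lift a
representation modulo `p`, then correct it by a square root of an element `≡ 1 mod p`). So the
size of a circle only depends on the `p`-adic valuation of its radius.

Since `-1` is not a square mod `p`, `p ∣ x² + y²` forces `p ∣ x` and `p ∣ y`. This gives `p²`
points on the circle of radius `0` and none when `p ∥ ρ`. The `p⁴` points with `p ∣ x, y` are
exactly those on circles with `p² ∣ ρ`, and the other `p⁶ - p⁴` points lie on circles of unit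
radius; dividing by the `p - 1` nonzero radii divisible by `p²`, resp. the `p³ - p²` unit radii,
gives `p³ + p²` in both cases.
-/

open Finset

theorem eq_zero_and_eq_zero_of_sq_add_sq_eq_zero {F : Type*} [Field F] (h : ¬IsSquare (-1 : F))
    {x y : F} (hxy : x ^ 2 + y ^ 2 = 0) : x = 0 ∧ y = 0 := by
  have hx : x = 0 := by
    by_contra hx
    exact h ⟨y / x, by field_simp; linear_combination -hxy⟩
  subst hx
  exact ⟨rfl, pow_eq_zero_iff two_ne_zero |>.mp (by simpa using hxy)⟩

section CommRing

variable {R : Type*} [CommRing R]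

theorem isSquare_one_add_of_pow_three_eq_zero (h2 : IsUnit (2 : R)) {n : R} (hn : n ^ 3 = 0) :
    IsSquare (1 + n) := by
  obtain ⟨h, hh⟩ := h2.exists_right_inv
  -- the binomial series `√(1 + n) = 1 + n/2 - n²/8 + ⋯`, truncated
  exact ⟨1 + h * n - h ^ 3 * n ^ 2, by
    linear_combination (h ^ 2 * n ^ 2 - n) * hh + (2 * h ^ 4 - h ^ 6 * n) * hn⟩

variable [Fintype R] [DecidableEq R]

variable (R) in
def circlePoints (ρ : R) : Finset (R × R) := {v | v.1 ^ 2 + v.2 ^ 2 = ρ}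

theorem ncard_setOf_sub_sq_add_sub_sq_eq (u : R × R) (ρ : R) :
    {v : R × R | (v.1 - u.1) ^ 2 + (v.2 - u.2) ^ 2 = ρ}.ncard = #(circlePoints R ρ) := by
  have : {v : R × R | (v.1 - u.1) ^ 2 + (v.2 - u.2) ^ 2 = ρ} = (· + u) '' ↑(circlePoints R ρ) := by
    ext v
    simp [circlePoints, sub_eq_add_neg]
  rw [this, Set.ncard_image_of_injective _ (add_left_injective u), Set.ncard_coe_finset]

theorem card_circlePoints_mul_of_sq_add_sq_eq {a b e : R} (he : IsUnit e) (hab : a ^ 2 + b ^ 2 = e)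
    (ρ : R) : #(circlePoints R (e * ρ)) = #(circlePoints R ρ) := by
  obtain ⟨t, ht⟩ := he.exists_left_inv
  symm
  -- multiplication by `a + b i` multiplies `x ^ 2 + y ^ 2` by `e`
  refine card_bij' (fun v _ => (a * v.1 - b * v.2, b * v.1 + a * v.2))
    (fun w _ => (t * (a * w.1 + b * w.2), t * (a * w.2 - b * w.1))) ?_ ?_ ?_ ?_
  all_goals simp only [circlePoints, mem_filter, mem_univ, true_and]
  · intro v hv
    linear_combination (v.1 ^ 2 + v.2 ^ 2) * hab + e * hv
  · intro w hw
    linear_combination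
      (t ^ 2 * (w.1 ^ 2 + w.2 ^ 2)) * hab + (t ^ 2 * e) * hw + (ρ * (t * e + 1)) * ht
  · intro v _
    refine Prod.ext ?_ ?_
    · linear_combination (t * v.1) * hab + v.1 * ht
    · linear_combination (t * v.2) * hab + v.2 * ht
  · intro w _
    refine Prod.ext ?_ ?_
    · linear_combination (t * w.1) * hab + w.1 * ht
    · linear_combination (t * w.2) * hab + w.2 * ht

theorem sum_card_circlePoints_filter (P : R → Prop) [DecidablePred P] :
    ∑ σ with P σ, #(circlePoints R σ) = #{v : R × R | P (v.1 ^ 2 + v.2 ^ 2)} := by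
  rw [card_eq_sum_card_fiberwise (f := fun v : R × R => v.1 ^ 2 + v.2 ^ 2)
    (t := {σ | P σ}) (fun v hv => by simpa using hv)]
  refine sum_congr rfl fun σ hσ => ?_
  rw [mem_filter] at hσ
  congr 1
  ext v
  simp only [circlePoints, mem_filter, mem_univ, true_and]
  exact ⟨fun h => ⟨h ▸ hσ.2, h⟩, And.right⟩

end CommRing

namespace ZMod

theorem natCast_dvd_iff_dvd_val {n d : ℕ} [NeZero n] (hd : d ∣ n) (x : ZMod n) :
    (d : ZMod n) ∣ x ↔ d ∣ x.val := by
  constructor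
  · rintro ⟨c, rfl⟩
    rw [← natCast_zmod_val c, ← Nat.cast_mul, val_natCast, Nat.dvd_mod_iff hd]
    exact dvd_mul_right d _
  · rintro ⟨t, ht⟩
    exact ⟨t, by rw [← natCast_zmod_val x, ht, Nat.cast_mul]⟩

theorem natCast_dvd_iff_castHom_eq_zero {n d : ℕ} [NeZero n] (hd : d ∣ n) (x : ZMod n) :
    (d : ZMod n) ∣ x ↔ castHom hd (ZMod d) x = 0 := by
  rw [natCast_dvd_iff_dvd_val hd, castHom_apply, cast_eq_val, natCast_eq_zero_iff]

theorem card_filter_natCast_dvd_mul {n d : ℕ} [NeZero n] (hd : d ∣ n) :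
    #{x : ZMod n | (d : ZMod n) ∣ x} * d = n := by
  set f := (castHom hd (ZMod d)).toAddMonoidHom
  have hker : #{x : ZMod n | (d : ZMod n) ∣ x} = Nat.card f.ker := by
    rw [← Nat.card_eq_finsetCard]
    simp [f, natCast_dvd_iff_castHom_eq_zero hd]
  have hrange : Nat.card f.range = d := by
    rw [AddMonoidHom.range_eq_top.mpr (castHom_surjective hd), AddSubgroup.card_top, Nat.card_zmod]
  calc #{x : ZMod n | (d : ZMod n) ∣ x} * d = Nat.card f.ker * f.ker.index := by
        rw [hker, AddSubgroup.index_ker, hrange]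
    _ = n := by rw [AddSubgroup.card_mul_index, Nat.card_zmod]

theorem isUnit_iff_not_natCast_dvd {p k : ℕ} (hp : p.Prime) (hk : k ≠ 0) (x : ZMod (p ^ k)) :
    IsUnit x ↔ ¬(p : ZMod (p ^ k)) ∣ x := by
  have : NeZero (p ^ k) := ⟨pow_ne_zero _ hp.ne_zero⟩
  rw [natCast_dvd_iff_dvd_val (dvd_pow_self p hk), ← isUnit_natCast_iff_not_dvd_pow hp
    (Nat.pos_of_ne_zero hk), natCast_zmod_val]

theorem isUnit_iff_castHom_ne_zero {p k : ℕ} (hp : p.Prime) (hk : k ≠ 0) (z : ZMod (p ^ k)) :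
    IsUnit z ↔ castHom (dvd_pow_self p hk) (ZMod p) z ≠ 0 := by
  have : NeZero (p ^ k) := ⟨pow_ne_zero _ hp.ne_zero⟩
  rw [isUnit_iff_not_natCast_dvd hp hk, natCast_dvd_iff_castHom_eq_zero]

theorem natCast_dvd_sq_add_sq_iff {n p : ℕ} [NeZero n] [Fact p.Prime] (hp4 : p % 4 = 3)
    (hpn : p ∣ n) {x y : ZMod n} :
    (p : ZMod n) ∣ x ^ 2 + y ^ 2 ↔ (p : ZMod n) ∣ x ∧ (p : ZMod n) ∣ y := by
  refine ⟨fun h => ?_, fun ⟨⟨a, ha⟩, ⟨b, hb⟩⟩ => ⟨p * (a ^ 2 + b ^ 2), by rw [ha, hb]; ring⟩⟩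
  simp only [natCast_dvd_iff_castHom_eq_zero hpn, map_add, map_pow] at h ⊢
  exact eq_zero_and_eq_zero_of_sq_add_sq_eq_zero (by rw [exists_sq_eq_neg_one_iff]; omega) h

theorem natCast_sq_dvd_sq_add_sq_iff {n p : ℕ} [NeZero n] [Fact p.Prime] (hp4 : p % 4 = 3)
    (hpn : p ∣ n) {x y : ZMod n} :
    (p : ZMod n) ^ 2 ∣ x ^ 2 + y ^ 2 ↔ (p : ZMod n) ∣ x ∧ (p : ZMod n) ∣ y := by
  refine ⟨fun h => ?_, fun ⟨⟨a, ha⟩, ⟨b, hb⟩⟩ => ⟨a ^ 2 + b ^ 2, by rw [ha, hb]; ring⟩⟩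
  exact (natCast_dvd_sq_add_sq_iff hp4 hpn).mp ((dvd_pow_self _ two_ne_zero).trans h)

theorem natCast_pow_eq_zero (p k : ℕ) : (p : ZMod (p ^ k)) ^ k = 0 := by
  rw [← Nat.cast_pow, natCast_self]

theorem pow_eq_zero_of_natCast_dvd {p k : ℕ} {z : ZMod (p ^ k)} (h : (p : ZMod (p ^ k)) ∣ z) :
    z ^ k = 0 := by
  obtain ⟨c, rfl⟩ := h
  rw [mul_pow, natCast_pow_eq_zero, zero_mul]

end ZMod

open ZMod

section PrimeCube

variable {p : ℕ} [hp : Fact p.Prime]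

local notation "π" => (p : ZMod (p ^ 3))

theorem exists_sq_add_sq_eq_of_isUnit (hp2 : p ≠ 2) {e : ZMod (p ^ 3)} (he : IsUnit e) :
    ∃ a b : ZMod (p ^ 3), a ^ 2 + b ^ 2 = e := by
  have hpn := dvd_pow_self p three_ne_zero
  set r := castHom hpn (ZMod p)
  obtain ⟨a₀, b₀, hab₀⟩ := ZMod.sq_add_sq p (r e)
  obtain ⟨a, rfl⟩ := castHom_surjective hpn a₀
  obtain ⟨b, rfl⟩ := castHom_surjective hpn b₀
  have hs : IsUnit (a ^ 2 + b ^ 2) := by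
    rw [isUnit_iff_castHom_ne_zero hp.out three_ne_zero, map_add, map_pow, map_pow, hab₀]
    exact (isUnit_iff_castHom_ne_zero hp.out three_ne_zero e).mp he
  obtain ⟨t, ht⟩ := hs.exists_right_inv
  have h2 : IsUnit (2 : ZMod (p ^ 3)) := by
    rw [isUnit_iff_castHom_ne_zero hp.out three_ne_zero, map_ofNat]
    exact Ring.two_ne_zero (by rwa [ringChar.eq (ZMod p) p])
  have hn : (e * t - 1) ^ 3 = 0 := by
    refine pow_eq_zero_of_natCast_dvd ((natCast_dvd_iff_castHom_eq_zero hpn _).mpr ?_)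
    have hrt := congrArg r ht
    simp only [map_mul, map_add, map_pow, map_one] at hrt
    rw [map_sub, map_mul, map_one, ← hab₀]
    linear_combination hrt
  -- `e = (a² + b²) · (1 + n)` with `n = e t - 1` nilpotent, and `1 + n` is a square
  obtain ⟨c, hc⟩ := isSquare_one_add_of_pow_three_eq_zero h2 hn
  exact ⟨a * c, b * c, by linear_combination -(a ^ 2 + b ^ 2) * hc + e * ht⟩

theorem card_circlePoints_mul_of_isUnit (hp2 : p ≠ 2) {e : ZMod (p ^ 3)} (he : IsUnit e)
    (ρ : ZMod (p ^ 3)) : #(circlePoints (ZMod (p ^ 3)) (e * ρ)) = #(circlePoints _ ρ) := by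
  obtain ⟨a, b, hab⟩ := exists_sq_add_sq_eq_of_isUnit hp2 he
  exact card_circlePoints_mul_of_sq_add_sq_eq he hab ρ

theorem exists_isUnit_mul_natCast_sq_eq {σ : ZMod (p ^ 3)} (h : π ^ 2 ∣ σ) (hσ : σ ≠ 0) :
    ∃ e, IsUnit e ∧ e * π ^ 2 = σ := by
  obtain ⟨c, rfl⟩ := h
  refine ⟨c, ?_, mul_comm _ _⟩
  rw [isUnit_iff_not_natCast_dvd hp.out three_ne_zero]
  rintro ⟨d, rfl⟩
  exact hσ (by linear_combination d * natCast_pow_eq_zero p 3)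

theorem sq_add_sq_eq_zero_iff_natCast_sq_dvd (hp4 : p % 4 = 3) {x y : ZMod (p ^ 3)} :
    x ^ 2 + y ^ 2 = 0 ↔ π ^ 2 ∣ x ∧ π ^ 2 ∣ y := by
  have hpn := dvd_pow_self p three_ne_zero
  constructor
  · intro h
    obtain ⟨⟨a, rfl⟩, ⟨b, rfl⟩⟩ := (natCast_dvd_sq_add_sq_iff hp4 hpn).mp (h ▸ dvd_zero _)
    have hπ : π ^ 2 ≠ 0 := by
      rw [← Nat.cast_pow, Ne, natCast_eq_zero_iff, Nat.pow_dvd_pow_iff_le_right hp.out.one_lt]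
      omega
    have hab : π ∣ a ^ 2 + b ^ 2 := by
      rw [← not_not (a := π ∣ _), ← isUnit_iff_not_natCast_dvd hp.out three_ne_zero]
      exact fun hu => hπ (hu.mul_left_eq_zero.mp (by linear_combination h))
    obtain ⟨⟨a', rfl⟩, ⟨b', rfl⟩⟩ := (natCast_dvd_sq_add_sq_iff hp4 hpn).mp hab
    exact ⟨⟨a', by ring⟩, ⟨b', by ring⟩⟩
  · rintro ⟨⟨a, rfl⟩, ⟨b, rfl⟩⟩
    linear_combination (π * (a ^ 2 + b ^ 2)) * natCast_pow_eq_zero p 3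

theorem card_filter_natCast_dvd : #{x : ZMod (p ^ 3) | π ∣ x} = p ^ 2 := by
  have h := card_filter_natCast_dvd_mul (n := p ^ 3) (dvd_pow_self p three_ne_zero)
  exact Nat.eq_of_mul_eq_mul_right hp.out.pos (by rw [h]; ring)

theorem card_filter_natCast_sq_dvd : #{x : ZMod (p ^ 3) | π ^ 2 ∣ x} = p := by
  have h := card_filter_natCast_dvd_mul (n := p ^ 3) (pow_dvd_pow p (by omega : 2 ≤ 3))
  simp only [Nat.cast_pow] at h
  exact Nat.eq_of_mul_eq_mul_right (pow_pos hp.out.pos 2) (by rw [h]; ring)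

theorem card_filter_natCast_dvd_and_natCast_dvd :
    #{v : ZMod (p ^ 3) × ZMod (p ^ 3) | π ∣ v.1 ∧ π ∣ v.2} = p ^ 4 := by
  rw [← univ_product_univ, filter_product, card_product, card_filter_natCast_dvd]
  ring

theorem card_circlePoints_zero (hp4 : p % 4 = 3) : #(circlePoints (ZMod (p ^ 3)) 0) = p ^ 2 := by
  have h : circlePoints (ZMod (p ^ 3)) 0 =
      ({v | π ^ 2 ∣ v.1 ∧ π ^ 2 ∣ v.2} : Finset (ZMod (p ^ 3) × ZMod (p ^ 3))) := by
    ext v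
    simp [circlePoints, sq_add_sq_eq_zero_iff_natCast_sq_dvd hp4]
  rw [h, ← univ_product_univ, filter_product, card_product, card_filter_natCast_sq_dvd, sq]

theorem card_circlePoints_eq_zero (hp4 : p % 4 = 3) {σ : ZMod (p ^ 3)} (h : π ∣ σ)
    (h' : ¬π ^ 2 ∣ σ) : #(circlePoints (ZMod (p ^ 3)) σ) = 0 := by
  have hpn := dvd_pow_self p three_ne_zero
  rw [card_eq_zero, circlePoints, filter_eq_empty_iff]
  rintro v - rfl
  exact h' ((natCast_sq_dvd_sq_add_sq_iff hp4 hpn).mpr ((natCast_dvd_sq_add_sq_iff hp4 hpn).mp h))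

theorem card_circlePoints_one (hp4 : p % 4 = 3) :
    #(circlePoints (ZMod (p ^ 3)) 1) = p ^ 3 + p ^ 2 := by
  have hpn := dvd_pow_self p three_ne_zero
  have hunit (z : ZMod (p ^ 3)) : IsUnit z ↔ ¬π ∣ z :=
    isUnit_iff_not_natCast_dvd hp.out three_ne_zero z
  set N := #(circlePoints (ZMod (p ^ 3)) 1)
  set U := #{σ : ZMod (p ^ 3) | IsUnit σ}
  have hU : U + p ^ 2 = p ^ 3 := by
    rw [← card_filter_natCast_dvd, add_comm]
    simp only [U, hunit]
    rw [card_filter_add_card_filter_not, card_univ, ZMod.card]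
  have hsum : U * N + p ^ 4 = p ^ 6 := by
    calc U * N + p ^ 4
        = ∑ σ with IsUnit σ, #(circlePoints _ σ) + p ^ 4 := by
          rw [sum_const_nat fun σ hσ => ?_]
          rw [mem_filter] at hσ
          rw [← mul_one σ, card_circlePoints_mul_of_isUnit (by omega) hσ.2]
      _ = #{v : ZMod (p ^ 3) × ZMod (p ^ 3) | IsUnit (v.1 ^ 2 + v.2 ^ 2)} +
            #{v : ZMod (p ^ 3) × ZMod (p ^ 3) | ¬IsUnit (v.1 ^ 2 + v.2 ^ 2)} := by
          simp only [sum_card_circlePoints_filter, hunit, not_not,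
            natCast_dvd_sq_add_sq_iff hp4 hpn, card_filter_natCast_dvd_and_natCast_dvd]
      _ = p ^ 6 := by
          rw [card_filter_add_card_filter_not, card_univ, Fintype.card_prod, ZMod.card]
          ring
  have hU0 : 0 < U := card_pos.mpr ⟨1, by simp⟩
  exact Nat.eq_of_mul_eq_mul_left hU0 (by linear_combination hsum - (p ^ 3 + p ^ 2) * hU)

theorem card_circlePoints_natCast_sq (hp4 : p % 4 = 3) :
    #(circlePoints (ZMod (p ^ 3)) (π ^ 2)) = p ^ 3 + p ^ 2 := by
  have hpn := dvd_pow_self p three_ne_zero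
  set M := #(circlePoints (ZMod (p ^ 3)) (π ^ 2))
  set S : Finset (ZMod (p ^ 3)) := {σ | π ^ 2 ∣ σ}
  have h0 : (0 : ZMod (p ^ 3)) ∈ S := by simp [S]
  have hK : #(S.erase 0) + 1 = p := by rw [card_erase_add_one h0, card_filter_natCast_sq_dvd]
  have hsum : p ^ 2 + #(S.erase 0) * M = p ^ 4 := by
    calc p ^ 2 + #(S.erase 0) * M
        = ∑ σ ∈ S, #(circlePoints _ σ) := by
          rw [← add_sum_erase S _ h0, card_circlePoints_zero hp4, sum_const_nat fun σ hσ => ?_]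
          obtain ⟨e, he, rfl⟩ := exists_isUnit_mul_natCast_sq_eq
            (mem_filter.mp (mem_of_mem_erase hσ)).2 (ne_of_mem_erase hσ)
          exact card_circlePoints_mul_of_isUnit (by omega) he _
      _ = p ^ 4 := by
          simp only [S, sum_card_circlePoints_filter, natCast_sq_dvd_sq_add_sq_iff hp4 hpn,
            card_filter_natCast_dvd_and_natCast_dvd]
  have hK0 : 0 < #(S.erase 0) := by have := hp.out.two_le; omega
  exact Nat.eq_of_mul_eq_mul_left hK0 (by linear_combination hsum - (p ^ 3 + p ^ 2) * hK)

end PrimeCube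

theorem circle_card_mod_p_cubed (p : ℕ) (hp : p.Prime) (hp4 : p % 4 = 3)
    (u : ZMod (p ^ 3) × ZMod (p ^ 3)) (ρ : ZMod (p ^ 3)) :
    (ρ = 0 →
      {v : ZMod (p ^ 3) × ZMod (p ^ 3) |
        (v.1 - u.1) ^ 2 + (v.2 - u.2) ^ 2 = ρ}.ncard = p ^ 2) ∧
    ((IsUnit ρ ∨ ∃ e : ZMod (p ^ 3), IsUnit e ∧ ρ = (p : ZMod (p ^ 3)) ^ 2 * e) →
      {v : ZMod (p ^ 3) × ZMod (p ^ 3) |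
        (v.1 - u.1) ^ 2 + (v.2 - u.2) ^ 2 = ρ}.ncard = p ^ 3 + p ^ 2) ∧
    ((p : ZMod (p ^ 3)) ∣ ρ → ¬ ((p : ZMod (p ^ 3)) ^ 2 ∣ ρ) →
      {v : ZMod (p ^ 3) × ZMod (p ^ 3) |
        (v.1 - u.1) ^ 2 + (v.2 - u.2) ^ 2 = ρ}.ncard = 0) := by
  have : Fact p.Prime := ⟨hp⟩
  have hp2 : p ≠ 2 := by omega
  rw [ncard_setOf_sub_sq_add_sub_sq_eq]
  refine ⟨?_, ?_, card_circlePoints_eq_zero hp4⟩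
  · rintro rfl
    exact card_circlePoints_zero hp4
  · rintro (hρ | ⟨e, he, rfl⟩)
    · rw [← mul_one ρ, card_circlePoints_mul_of_isUnit hp2 hρ, card_circlePoints_one hp4]
    · rw [mul_comm, card_circlePoints_mul_of_isUnit hp2 he, card_circlePoints_natCast_sq hp4]
end

section
/- Let p be a prime with p ≡ 3 (mod 4) and q = p³. The number of pairs (u₁,u₂) ∈ (ℤ/qℤ)² × (ℤ/qℤ)² with ‖u₁ − u₂‖ = ρ equals p⁸ if ρ = 0, equals p⁹ + p⁸ if ρ is a unit or ρ ∈ p²·(ℤ/qℤ)^×, and equals 0 if p ∣ ρ but p² ∤ ρ. -/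
/-!
Translating `(u₁, u₂) ↦ (u₁ - u₂, u₂)` reduces the count to `p⁶` times the size of the circle
`x² + y² = ρ` over `ℤ/p³`. Since `-1` is not a square mod `p`, `x² + y² ≡ 0 (mod p)` forces
`x ≡ y ≡ 0`. Hence for `p ∣ ρ` every point is `(p x', p y')`, which is impossible when `p ∥ ρ` and
otherwise relates the circle of `p² c` to the circle of `c mod p` (of size `1` or `p + 1`), each
point mod `p` accounting for `p²` points. For a unit `ρ`, each of the `p + 1` points mod `p` lifts
to exactly `p²` points by Hensel's lemma: one coordinate is free, the other is then a unique
square root.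
-/

open Finset

namespace PairDistance

section General

variable {R : Type*} [CommRing R] [Fintype R] [DecidableEq R]

def circle (ρ : R) : Finset (R × R) := {v | v.1 ^ 2 + v.2 ^ 2 = ρ}

@[simp]
lemma mem_circle {ρ : R} {v : R × R} : v ∈ circle ρ ↔ v.1 ^ 2 + v.2 ^ 2 = ρ := by
  simp [circle]

lemma ncard_setOf_sub_mem_circle (ρ : R) :
    {uv : (R × R) × (R × R) | (uv.1.1 - uv.2.1) ^ 2 + (uv.1.2 - uv.2.2) ^ 2 = ρ}.ncard =
      #(circle ρ) * Fintype.card R ^ 2 := by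
  rw [Set.ncard_eq_toFinset_card', sq, ← Fintype.card_prod, ← card_univ, ← card_product]
  refine card_nbij' (fun uv => (uv.1 - uv.2, uv.2)) (fun vw => (vw.1 + vw.2, vw.2))
    ?_ ?_ ?_ ?_ <;> intro x hx <;> simp_all

lemma card_circle_mul_sq_add_sq {u α β : R} (hu : IsUnit u) (hαβ : α ^ 2 + β ^ 2 = u)
    (c : R) : #(circle (u * c)) = #(circle c) := by
  obtain ⟨w, hw⟩ := hu.exists_left_inv
  -- multiplication by the Gaussian number `α + β i` and by its inverse
  refine card_nbij' (fun v => (w * (α * v.1 + β * v.2), w * (α * v.2 - β * v.1)))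
    (fun v => (α * v.1 - β * v.2, β * v.1 + α * v.2)) ?_ ?_ ?_ ?_
  · intro v hv
    simp only [mem_coe, mem_circle] at hv ⊢
    linear_combination
      w ^ 2 * (v.1 ^ 2 + v.2 ^ 2) * hαβ + w ^ 2 * u * hv + (w * u + 1) * c * hw
  · intro v hv
    simp only [mem_coe, mem_circle] at hv ⊢
    linear_combination (v.1 ^ 2 + v.2 ^ 2) * hαβ + u * hv
  · intro v _
    ext
    · linear_combination w * v.1 * hαβ + v.1 * hw
    · linear_combination w * v.2 * hαβ + v.2 * hw
  · intro v _
    ext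
    · linear_combination w * v.1 * hαβ + v.1 * hw
    · linear_combination w * v.2 * hαβ + v.2 * hw

lemma sum_card_circle : ∑ c : R, #(circle c) = Fintype.card R ^ 2 := by
  rw [sq, ← Fintype.card_prod, ← card_univ,
    card_eq_sum_card_fiberwise (f := fun v : R × R => v.1 ^ 2 + v.2 ^ 2) fun _ _ => mem_univ _]
  rfl

end General

lemma card_fiber_mul_card_image {F G H : Type*} [AddGroup G] [AddGroup H] [Fintype G]
    [DecidableEq H] [FunLike F G H] [AddMonoidHomClass F G H] (f : F) {a : H}
    (ha : a ∈ Set.range f) :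
    #{x | f x = a} * #(univ.image f) = Fintype.card G := by
  obtain ⟨s, rfl⟩ := ha
  have hfiber : ∀ b ∈ univ.image f, #{x | f x = b} = #{x | f x = f s} := by
    intro b hb
    obtain ⟨t, -, rfl⟩ := mem_image.mp hb
    refine card_nbij' (· - t + s) (· - s + t) ?_ ?_ ?_ ?_ <;> intro x hx <;> simp_all
  rw [← card_univ,
    card_eq_sum_card_fiberwise (s := univ) fun x _ => mem_image_of_mem f (mem_univ x),
    sum_congr rfl hfiber, sum_const, smul_eq_mul, mul_comm]

section Prime

variable {p : ℕ} [Fact p.Prime]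

lemma eq_zero_of_sq_add_sq_eq_zero (hp4 : p % 4 = 3) {a b : ZMod p} (h : a ^ 2 + b ^ 2 = 0) :
    a = 0 ∧ b = 0 := by
  have hb : b = 0 := by
    by_contra hb
    exact ZMod.mod_four_ne_three_of_sq_eq_neg_sq' hb (eq_neg_of_add_eq_zero_left h) hp4
  subst hb
  exact ⟨pow_eq_zero_iff two_ne_zero |>.mp (by simpa using h), rfl⟩

lemma circle_zero (hp4 : p % 4 = 3) : circle (0 : ZMod p) = {0} := by
  ext v
  simp only [mem_circle, mem_singleton, Prod.ext_iff, Prod.fst_zero, Prod.snd_zero]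
  refine ⟨eq_zero_of_sq_add_sq_eq_zero hp4, ?_⟩
  rintro ⟨h₁, h₂⟩
  simp [h₁, h₂]

lemma card_circle_of_ne_zero (hp4 : p % 4 = 3) {c : ZMod p} (hc : c ≠ 0) :
    #(circle c) = p + 1 := by
  have hconst : ∀ d ∈ univ.erase (0 : ZMod p), #(circle d) = #(circle (1 : ZMod p)) := by
    intro d hd
    obtain ⟨α, β, hαβ⟩ := ZMod.sq_add_sq p d
    simpa using card_circle_mul_sq_add_sq (ne_of_mem_erase hd).isUnit hαβ 1
  have hsum := sum_card_circle (R := ZMod p)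
  rw [← add_sum_erase _ _ (mem_univ 0), sum_congr rfl hconst, sum_const, card_erase_of_mem
    (mem_univ _), circle_zero hp4, card_singleton, card_univ, ZMod.card, smul_eq_mul] at hsum
  rw [hconst c (mem_erase.mpr ⟨hc, mem_univ c⟩)]
  have hp := (Fact.out : p.Prime).one_lt
  have : (p - 1) * #(circle (1 : ZMod p)) = (p - 1) * (p + 1) := by
    zify [hp.le] at hsum ⊢
    linarith
  exact Nat.eq_of_mul_eq_mul_left (by omega) this

end Prime

lemma exists_add_mul_sq_eq_sq_add {R : Type*} [CommRing R] (h2 : IsUnit (2 : R)) {b n : R}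
    (hb : IsUnit b) (hn : n ^ 3 = 0) : ∃ r, (b + n * r) ^ 2 = b ^ 2 + n := by
  obtain ⟨i, hi⟩ := hb.exists_right_inv
  obtain ⟨h, hh⟩ := h2.exists_right_inv
  -- truncated binomial series: `b * √(1 + t) = b * (1 + t / 2 - t ^ 2 / 8)` with `t = n / b ^ 2`
  refine ⟨h * i - h ^ 3 * n * i ^ 3, ?_⟩
  linear_combination (2 * h * n - 2 * h ^ 3 * n ^ 2 * i ^ 2) * hi
    + (n - h ^ 2 * n ^ 2 * i ^ 2) * hh + (-2 * h ^ 4 * i ^ 4 + n * h ^ 6 * i ^ 6) * hn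

section PrimeCube

variable {p : ℕ}

def residue (p : ℕ) : ZMod (p ^ 3) →+* ZMod p :=
  ZMod.castHom (dvd_pow_self p three_ne_zero) (ZMod p)

lemma residue_surjective : Function.Surjective (residue p) :=
  ZMod.castHom_surjective _

lemma natCast_pow_three_eq_zero : (p : ZMod (p ^ 3)) ^ 3 = 0 := by
  exact_mod_cast ZMod.natCast_self (p ^ 3)

variable [Fact p.Prime]

lemma residue_apply (x : ZMod (p ^ 3)) : residue p x = x.val := by
  rw [residue, ZMod.castHom_apply, ZMod.cast_eq_val]

lemma residue_eq_zero_iff {x : ZMod (p ^ 3)} : residue p x = 0 ↔ ∃ y, x = p * y := by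
  refine ⟨fun hx => ?_, ?_⟩
  · rw [residue_apply, ZMod.natCast_eq_zero_iff] at hx
    obtain ⟨k, hk⟩ := hx
    exact ⟨k, by rw [← ZMod.natCast_zmod_val x, hk, Nat.cast_mul]⟩
  · rintro ⟨y, rfl⟩
    rw [map_mul, map_natCast, ZMod.natCast_self, zero_mul]

lemma sq_mul_eq_zero_iff {t : ZMod (p ^ 3)} :
    (p : ZMod (p ^ 3)) ^ 2 * t = 0 ↔ residue p t = 0 := by
  refine ⟨fun ht => ?_, ?_⟩
  · rw [← ZMod.natCast_zmod_val t] at ht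
    rw [residue_apply, ZMod.natCast_eq_zero_iff]
    have h : p ^ 2 * p ∣ p ^ 2 * t.val := by
      rw [← pow_succ]
      exact (ZMod.natCast_eq_zero_iff _ _).mp (by exact_mod_cast ht)
    exact Nat.dvd_of_mul_dvd_mul_left (pow_pos (Fact.out : p.Prime).pos 2) h
  · rw [residue_eq_zero_iff]
    rintro ⟨y, rfl⟩
    linear_combination y * natCast_pow_three_eq_zero

lemma isUnit_iff_residue_ne_zero {x : ZMod (p ^ 3)} : IsUnit x ↔ residue p x ≠ 0 := by
  conv_lhs => rw [← ZMod.natCast_zmod_val x]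
  rw [ZMod.isUnit_natCast_iff_not_dvd_pow (Fact.out : p.Prime) three_pos, residue_apply, ne_eq,
    ZMod.natCast_eq_zero_iff]

lemma card_filter_residue_eq (a : ZMod p) : #{x : ZMod (p ^ 3) | residue p x = a} = p ^ 2 := by
  have h := card_fiber_mul_card_image (residue p) (residue_surjective a)
  rw [image_univ_of_surjective residue_surjective, card_univ, ZMod.card, ZMod.card] at h
  exact Nat.eq_of_mul_eq_mul_right (Fact.out : p.Prime).pos (by rw [h]; ring)

lemma card_filter_residue_prod_eq (ab : ZMod p × ZMod p) :
    #{v : ZMod (p ^ 3) × ZMod (p ^ 3) | (residue p v.1, residue p v.2) = ab} = p ^ 4 := by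
  have hsurj : Function.Surjective ((residue p : ZMod (p ^ 3) →+ ZMod p).prodMap
      (residue p : ZMod (p ^ 3) →+ ZMod p)) := by
    simpa using Prod.map_surjective.mpr ⟨residue_surjective (p := p), residue_surjective (p := p)⟩
  have h := card_fiber_mul_card_image _ (hsurj ab)
  rw [image_univ_of_surjective hsurj] at h
  simp only [AddMonoidHom.coe_prodMap, Prod.map, AddMonoidHom.coe_coe, card_univ,
    Fintype.card_prod, ZMod.card] at h
  exact Nat.eq_of_mul_eq_mul_right (pow_pos (Fact.out : p.Prime).pos 2)
    (by rw [sq]; exact h.trans (by ring))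

lemma image_natCast_mul :
    univ.image ((p : ZMod (p ^ 3) × ZMod (p ^ 3)) * ·) =
      ({v | (residue p v.1, residue p v.2) = 0} : Finset (ZMod (p ^ 3) × ZMod (p ^ 3))) := by
  ext w
  simp only [mem_image, mem_univ, true_and, mem_filter, Prod.ext_iff, Prod.fst_zero,
    Prod.snd_zero, residue_eq_zero_iff, Prod.fst_mul, Prod.snd_mul, Prod.fst_natCast,
    Prod.snd_natCast]
  constructor
  · rintro ⟨v, h₁, h₂⟩
    exact ⟨⟨v.1, h₁.symm⟩, ⟨v.2, h₂.symm⟩⟩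
  · rintro ⟨⟨y₁, h₁⟩, ⟨y₂, h₂⟩⟩
    exact ⟨(y₁, y₂), h₁.symm, h₂.symm⟩

lemma card_filter_natCast_mul_eq {w : ZMod (p ^ 3) × ZMod (p ^ 3)}
    (hw : (residue p w.1, residue p w.2) = 0) :
    #{v | (p : ZMod (p ^ 3) × ZMod (p ^ 3)) * v = w} = p ^ 2 := by
  have hrange : w ∈ Set.range (AddMonoidHom.mulLeft (p : ZMod (p ^ 3) × ZMod (p ^ 3))) := by
    have : w ∈ univ.image ((p : ZMod (p ^ 3) × ZMod (p ^ 3)) * ·) := by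
      rw [image_natCast_mul]; simpa using hw
    simpa using this
  have h := card_fiber_mul_card_image _ hrange
  simp only [AddMonoidHom.coe_mulLeft, image_natCast_mul, card_filter_residue_prod_eq,
    Fintype.card_prod, ZMod.card] at h
  exact Nat.eq_of_mul_eq_mul_right (pow_pos (Fact.out : p.Prime).pos 4)
    (h.trans (by ring))

lemma residue_eq_zero_of_mem_circle (hp4 : p % 4 = 3) {ρ : ZMod (p ^ 3)} (hρ : residue p ρ = 0)
    {w : ZMod (p ^ 3) × ZMod (p ^ 3)} (hw : w ∈ circle ρ) :
    (residue p w.1, residue p w.2) = 0 := by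
  rw [mem_circle] at hw
  have h := congrArg (residue p) hw
  rw [map_add, map_pow, map_pow, hρ] at h
  obtain ⟨h₁, h₂⟩ := eq_zero_of_sq_add_sq_eq_zero hp4 h
  rw [h₁, h₂, Prod.mk_zero_zero]

lemma natCast_mul_mem_circle_iff (c : ZMod (p ^ 3)) (v : ZMod (p ^ 3) × ZMod (p ^ 3)) :
    (p : ZMod (p ^ 3) × ZMod (p ^ 3)) * v ∈ circle ((p : ZMod (p ^ 3)) ^ 2 * c) ↔
      (residue p v.1, residue p v.2) ∈ circle (residue p c) := by
  simp only [mem_circle, Prod.fst_mul, Prod.snd_mul, Prod.fst_natCast, Prod.snd_natCast]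
  rw [← sub_eq_zero, show ((p : ZMod (p ^ 3)) * v.1) ^ 2 + (p * v.2) ^ 2 - p ^ 2 * c =
    p ^ 2 * (v.1 ^ 2 + v.2 ^ 2 - c) by ring, sq_mul_eq_zero_iff, map_sub, map_add, map_pow,
    map_pow, sub_eq_zero]

lemma card_circle_sq_mul (hp4 : p % 4 = 3) (c : ZMod (p ^ 3)) :
    #(circle ((p : ZMod (p ^ 3)) ^ 2 * c)) = #(circle (residue p c)) * p ^ 2 := by
  set D : Finset (ZMod (p ^ 3) × ZMod (p ^ 3)) :=
    {v | (residue p v.1, residue p v.2) ∈ circle (residue p c)}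
  have hres : residue p ((p : ZMod (p ^ 3)) ^ 2 * c) = 0 := by
    rw [map_mul, map_pow, map_natCast, ZMod.natCast_self, zero_pow two_ne_zero, zero_mul]
  refine Nat.eq_of_mul_eq_mul_right (pow_pos (Fact.out : p.Prime).pos 2) ?_
  -- `D` is the preimage of the circle under `v ↦ p v`; count it along `v ↦ p v` and along `residue`
  calc #(circle ((p : ZMod (p ^ 3)) ^ 2 * c)) * p ^ 2
      = ∑ w ∈ circle ((p : ZMod (p ^ 3)) ^ 2 * c), #{v ∈ D | (p : _) * v = w} := by
        rw [sum_const_nat fun w hw => ?_]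
        rw [filter_filter,
          ← card_filter_natCast_mul_eq (residue_eq_zero_of_mem_circle hp4 hres hw)]
        congr 1
        refine filter_congr fun v _ => ⟨And.right, fun hv => ⟨?_, hv⟩⟩
        rw [← natCast_mul_mem_circle_iff, hv]
        exact hw
    _ = #D := (card_eq_sum_card_fiberwise fun v hv =>
        (natCast_mul_mem_circle_iff c v).mpr (mem_filter.mp hv).2).symm
    _ = ∑ ab ∈ circle (residue p c), #{v ∈ D | (residue p v.1, residue p v.2) = ab} :=
        card_eq_sum_card_fiberwise fun v hv => (mem_filter.mp hv).2
    _ = #(circle (residue p c)) * p ^ 2 * p ^ 2 := by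
        rw [sum_const_nat fun ab hab => ?_, mul_assoc, ← pow_add]
        rw [filter_filter, ← card_filter_residue_prod_eq ab]
        congr 1
        exact filter_congr fun v _ => ⟨And.right, fun hv => ⟨hv ▸ hab, hv⟩⟩

lemma card_filter_circle_residue_eq (hp4 : p % 4 = 3) {u : ZMod (p ^ 3)} {a b : ZMod p}
    (hb : b ≠ 0) (hab : a ^ 2 + b ^ 2 = residue p u) :
    #{v ∈ circle u | (residue p v.1, residue p v.2) = (a, b)} = p ^ 2 := by
  have h2 : (2 : ZMod p) ≠ 0 := Ring.two_ne_zero (by rw [ZMod.ringChar_zmod_n]; omega)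
  rw [← card_filter_residue_eq a]
  refine card_nbij Prod.fst (fun v hv => by simp_all) ?_ ?_
  · intro v hv w hw hvw
    simp only [coe_filter, mem_circle, Prod.mk.injEq, Set.mem_ofPred_eq] at hv hw
    have hsq : v.2 ^ 2 = w.2 ^ 2 := by rw [hvw] at hv; linear_combination hv.1 - hw.1
    have hunit : IsUnit (v.2 + w.2) := isUnit_iff_residue_ne_zero.mpr <| by
      rw [map_add, hv.2.2, hw.2.2, ← two_mul]; exact mul_ne_zero h2 hb
    refine Prod.ext hvw (sub_eq_zero.mp (hunit.mul_left_eq_zero.mp ?_))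
    linear_combination hsq
  · intro x hx
    simp only [coe_filter, mem_univ, true_and, Set.mem_ofPred_eq] at hx
    obtain ⟨B, hB⟩ := residue_surjective b
    set n := u - x ^ 2 - B ^ 2
    have hn : residue p n = 0 := by rw [map_sub, map_sub, map_pow, map_pow, hx, hB, ← hab]; ring
    have hn3 : n ^ 3 = 0 := by
      obtain ⟨m, hm⟩ := residue_eq_zero_iff.mp hn
      rw [hm, mul_pow, natCast_pow_three_eq_zero, zero_mul]
    obtain ⟨r, hr⟩ := exists_add_mul_sq_eq_sq_add
      (isUnit_iff_residue_ne_zero.mpr (by rwa [map_ofNat]))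
      (isUnit_iff_residue_ne_zero.mpr (hB ▸ hb)) hn3
    refine ⟨(x, B + n * r), ?_, rfl⟩
    simp only [coe_filter, mem_circle, Prod.mk.injEq, Set.mem_ofPred_eq, map_add, map_mul, hn, hx,
      hB]
    exact ⟨by linear_combination hr, trivial, by ring⟩

lemma card_circle_of_isUnit (hp4 : p % 4 = 3) {u : ZMod (p ^ 3)} (hu : IsUnit u) :
    #(circle u) = (p + 1) * p ^ 2 := by
  have hres := isUnit_iff_residue_ne_zero.mp hu
  have hmaps : ∀ v ∈ circle u, (residue p v.1, residue p v.2) ∈ circle (residue p u) := by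
    intro v hv
    rw [mem_circle] at hv ⊢
    rw [← hv, map_add, map_pow, map_pow]
  rw [card_eq_sum_card_fiberwise hmaps, sum_const_nat fun ab hab => ?_,
    card_circle_of_ne_zero hp4 hres]
  obtain ⟨a, b⟩ := ab
  rw [mem_circle] at hab
  by_cases hb : b = 0
  · have ha : a ≠ 0 := by rintro rfl; simp [hb] at hab; exact hres hab.symm
    calc #{v ∈ circle u | (residue p v.1, residue p v.2) = (a, b)}
        = #{v ∈ circle u | (residue p v.1, residue p v.2) = (b, a)} := by
          refine card_nbij' Prod.swap Prod.swap ?_ ?_ (fun _ _ => rfl) (fun _ _ => rfl) <;>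
            intro v hv <;> simp_all [add_comm]
      _ = p ^ 2 := card_filter_circle_residue_eq hp4 ha (by rw [← hab, add_comm])
  · exact card_filter_circle_residue_eq hp4 hb hab

lemma circle_eq_empty (hp4 : p % 4 = 3) {ρ : ZMod (p ^ 3)} (h₁ : (p : ZMod (p ^ 3)) ∣ ρ)
    (h₂ : ¬(p : ZMod (p ^ 3)) ^ 2 ∣ ρ) : circle ρ = ∅ := by
  refine eq_empty_of_forall_notMem fun w hw => h₂ ?_
  have hρ : residue p ρ = 0 :=
    residue_eq_zero_iff.mpr (by simpa [dvd_iff_exists_eq_mul_right] using h₁)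
  have hw₀ := residue_eq_zero_of_mem_circle hp4 hρ hw
  obtain ⟨x, hx⟩ := residue_eq_zero_iff.mp (congrArg Prod.fst hw₀)
  obtain ⟨y, hy⟩ := residue_eq_zero_iff.mp (congrArg Prod.snd hw₀)
  rw [mem_circle, hx, hy] at hw
  exact ⟨x ^ 2 + y ^ 2, by rw [← hw]; ring⟩

end PrimeCube

end PairDistance

theorem distance_pair_count_mod_p_cubed (p : ℕ) (hp : p.Prime) (hp4 : p % 4 = 3)
    (ρ : ZMod (p ^ 3)) :
    (ρ = 0 →
      {uv : (ZMod (p ^ 3) × ZMod (p ^ 3)) × (ZMod (p ^ 3) × ZMod (p ^ 3)) |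
        (uv.1.1 - uv.2.1) ^ 2 + (uv.1.2 - uv.2.2) ^ 2 = ρ}.ncard = p ^ 8) ∧
    ((IsUnit ρ ∨ ∃ e : ZMod (p ^ 3), IsUnit e ∧ ρ = (p : ZMod (p ^ 3)) ^ 2 * e) →
      {uv : (ZMod (p ^ 3) × ZMod (p ^ 3)) × (ZMod (p ^ 3) × ZMod (p ^ 3)) |
        (uv.1.1 - uv.2.1) ^ 2 + (uv.1.2 - uv.2.2) ^ 2 = ρ}.ncard = p ^ 9 + p ^ 8) ∧
    ((p : ZMod (p ^ 3)) ∣ ρ → ¬ ((p : ZMod (p ^ 3)) ^ 2 ∣ ρ) →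
      {uv : (ZMod (p ^ 3) × ZMod (p ^ 3)) × (ZMod (p ^ 3) × ZMod (p ^ 3)) |
        (uv.1.1 - uv.2.1) ^ 2 + (uv.1.2 - uv.2.2) ^ 2 = ρ}.ncard = 0) := by
  open PairDistance in
  have : Fact p.Prime := ⟨hp⟩
  simp only [ncard_setOf_sub_mem_circle, ZMod.card]
  refine ⟨?_, ?_, fun h₁ h₂ => by rw [circle_eq_empty hp4 h₁ h₂, card_empty, zero_mul]⟩
  · rintro rfl
    rw [← mul_zero ((p : ZMod (p ^ 3)) ^ 2), card_circle_sq_mul hp4, map_zero, circle_zero hp4,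
      card_singleton]
    ring
  · rintro (hu | ⟨e, he, rfl⟩)
    · rw [card_circle_of_isUnit hp4 hu]
      ring
    · rw [card_circle_sq_mul hp4, card_circle_of_ne_zero hp4 (isUnit_iff_residue_ne_zero.mp he)]
      ring
end

section
/- Let p ≡ 3 (mod 4) be prime, q = p³, and let u ∈ (ℤ/qℤ)², ρ ∈ (ℤ/qℤ)^×. If x, y ∈ C_ρ(u) (i.e., ‖x−u‖ = ‖y−u‖ = ρ), then there is a unique rotation fixing u and sending x to y; that is, a unique pair (a,b) ∈ (ℤ/qℤ)² with a² + b² = 1 such that the affine map v ↦ [[a,−b],[b,a]](v−u) + u sends x to y. -/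
theorem unique_rotation_on_circle (p : ℕ) (hp : p.Prime) (hp4 : p % 4 = 3)
    (u x y : ZMod (p ^ 3) × ZMod (p ^ 3)) (ρ : ZMod (p ^ 3)) (hρ : IsUnit ρ)
    (hx : (x.1 - u.1) ^ 2 + (x.2 - u.2) ^ 2 = ρ)
    (hy : (y.1 - u.1) ^ 2 + (y.2 - u.2) ^ 2 = ρ) :
    ∃! ab : ZMod (p ^ 3) × ZMod (p ^ 3),
      ab.1 ^ 2 + ab.2 ^ 2 = 1 ∧
      (ab.1 * (x.1 - u.1) - ab.2 * (x.2 - u.2) + u.1,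
        ab.2 * (x.1 - u.1) + ab.1 * (x.2 - u.2) + u.2) = y := by
  obtain ⟨w, hw⟩ := hρ
  set r : ZMod (p ^ 3) := ↑w⁻¹ with hrdef
  have hr : ρ * r = 1 := by rw [← hw]; exact w.mul_inv
  refine ⟨((((y.1 - u.1) * (x.1 - u.1) + (y.2 - u.2) * (x.2 - u.2)) * r),
      (((y.2 - u.2) * (x.1 - u.1) - (y.1 - u.1) * (x.2 - u.2)) * r)), ⟨?_, ?_⟩, ?_⟩
  · linear_combination (((y.1 - u.1) ^ 2 + (y.2 - u.2) ^ 2) * r ^ 2) * hx +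
      (ρ * r ^ 2) * hy + (ρ * r + 1) * hr
  · have h1 : ((y.1 - u.1) * (x.1 - u.1) + (y.2 - u.2) * (x.2 - u.2)) * r * (x.1 - u.1) -
        ((y.2 - u.2) * (x.1 - u.1) - (y.1 - u.1) * (x.2 - u.2)) * r * (x.2 - u.2) + u.1 = y.1 := by
      linear_combination ((y.1 - u.1) * r) * hx + (y.1 - u.1) * hr
    have h2 : ((y.2 - u.2) * (x.1 - u.1) - (y.1 - u.1) * (x.2 - u.2)) * r * (x.1 - u.1) +
        ((y.1 - u.1) * (x.1 - u.1) + (y.2 - u.2) * (x.2 - u.2)) * r * (x.2 - u.2) + u.2 = y.2 := by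
      linear_combination ((y.2 - u.2) * r) * hx + (y.2 - u.2) * hr
    exact Prod.ext h1 h2
  · rintro ⟨a, b⟩ ⟨hab, heq⟩
    rw [Prod.ext_iff] at heq
    obtain ⟨h1, h2⟩ := heq
    simp only at h1 h2 ⊢
    rw [Prod.ext_iff]
    constructor
    · linear_combination ((x.1 - u.1) * r) * h1 + ((x.2 - u.2) * r) * h2 -
        (a * r) * hx - a * hr
    · linear_combination ((x.1 - u.1) * r) * h2 - ((x.2 - u.2) * r) * h1 -
        (b * r) * hx - b * hr
end

section
/- Let p ≡ 3 (mod 4) be prime and q = p³. Suppose x, z, y, w ∈ (ℤ/qℤ)² and B(x,z) = B(y,w) = B is a non-isotropic line, where B(x,z) := {v : ‖v−x‖ = ‖v−z‖}. Then ‖x − y‖ = ‖z − w‖. -/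
/-!
The bisector `B(x, z)` is cut out by the linear equation `2 (z - x) · v = ‖z‖ - ‖x‖`. If it is
the line `a v₁ + b v₂ = c` with `a` a unit, comparing two points of that line shows that
`z - x` is a multiple `t (a, b)` of its normal, and since the midpoint `(x + z) / 2` (`p` is
odd) lies on `B(x, z)` we get `(a, b) · x + t ‖(a, b)‖ / 2 = c`. Writing likewise
`w - y = s (a, b)`, the two midpoint equations give `2 (a, b) · (x - y) = (s - t) ‖(a, b)‖`,
and expanding `‖z - w‖ = ‖(x - y) + (t - s) (a, b)‖` the cross term cancels the quadratic one.
-/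

namespace RingPlane

variable {R : Type*} [CommRing R]

def quadNorm (v : R × R) : R := v.1 ^ 2 + v.2 ^ 2

def perpBisector (x z : R × R) : Set (R × R) := {v | quadNorm (v - x) = quadNorm (v - z)}

def line (a b c : R) : Set (R × R) := {v | a * v.1 + b * v.2 = c}

theorem perpBisector_eq_line (x z : R × R) :
    perpBisector x z =
      line (2 * (z.1 - x.1)) (2 * (z.2 - x.2)) (quadNorm z - quadNorm x) := by
  ext v
  simp only [perpBisector, line, quadNorm, Set.mem_ofPred_eq, Prod.fst_sub, Prod.snd_sub]
  constructor <;> intro h <;> linear_combination h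

theorem exists_proportional_of_line_subset {a b c α β γ : R} (ha : IsUnit a)
    (h : line a b c ⊆ line α β γ) : ∃ t, α = t * a ∧ β = t * b := by
  obtain ⟨a', haa'⟩ := ha.exists_right_inv
  have h₀ : α * (a' * c) + β * 0 = γ :=
    @h (a' * c, 0) (show a * (a' * c) + b * 0 = c by linear_combination c * haa')
  have h₁ : α * (a' * (c - b)) + β * 1 = γ :=
    @h (a' * (c - b), 1) (show a * (a' * (c - b)) + b * 1 = c by linear_combination (c - b) * haa')
  exact ⟨α * a', by linear_combination -α * haa', by linear_combination h₁ - h₀⟩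

variable [Invertible (2 : R)]

theorem midpoint_mem_perpBisector (x z : R × R) : (⅟2 : R) • (x + z) ∈ perpBisector x z := by
  have h₂ : (2 : R) * ⅟2 = 1 := mul_invOf_self 2
  simp only [perpBisector, quadNorm, Set.mem_ofPred_eq, Prod.fst_sub, Prod.snd_sub,
    Prod.smul_fst, Prod.smul_snd, Prod.fst_add, Prod.snd_add, smul_eq_mul]
  linear_combination (z.1 ^ 2 + z.2 ^ 2 - x.1 ^ 2 - x.2 ^ 2) * h₂

theorem exists_eq_add_smul_of_line_subset_perpBisector {a b c : R} {x z : R × R}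
    (ha : IsUnit a) (h : line a b c ⊆ perpBisector x z) : ∃ t : R, z = x + t • (a, b) := by
  rw [perpBisector_eq_line] at h
  obtain ⟨t, hα, hβ⟩ := exists_proportional_of_line_subset ha h
  have h₂ : (2 : R) * ⅟2 = 1 := mul_invOf_self 2
  refine ⟨⅟2 * t, Prod.ext ?_ ?_⟩
  · simp only [Prod.fst_add, Prod.smul_fst, smul_eq_mul]
    linear_combination ⅟2 * hα - (z.1 - x.1) * h₂
  · simp only [Prod.snd_add, Prod.smul_snd, smul_eq_mul]
    linear_combination ⅟2 * hβ - (z.2 - x.2) * h₂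

theorem quadNorm_sub_eq_of_perpBisector_eq_line {a b c : R} {x z y w : R × R}
    (ha : IsUnit a) (hxz : perpBisector x z = line a b c) (hyw : perpBisector y w = line a b c) :
    quadNorm (x - y) = quadNorm (z - w) := by
  obtain ⟨t, rfl⟩ := exists_eq_add_smul_of_line_subset_perpBisector ha hxz.ge
  obtain ⟨s, rfl⟩ := exists_eq_add_smul_of_line_subset_perpBisector ha hyw.ge
  have hx : (⅟2 : R) • (x + (x + t • (a, b))) ∈ line a b c :=
    hxz ▸ midpoint_mem_perpBisector _ _
  have hy : (⅟2 : R) • (y + (y + s • (a, b))) ∈ line a b c :=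
    hyw ▸ midpoint_mem_perpBisector _ _
  have h₂ : (2 : R) * ⅟2 = 1 := mul_invOf_self 2
  simp only [line, quadNorm, Set.mem_ofPred_eq, Prod.fst_sub, Prod.snd_sub, Prod.fst_add,
    Prod.snd_add, Prod.smul_fst, Prod.smul_snd, smul_eq_mul] at hx hy ⊢
  linear_combination (-2 * (t - s)) * (hx - hy) +
    (t - s) * (2 * (a * (x.1 - y.1) + b * (x.2 - y.2)) + (t - s) * (a ^ 2 + b ^ 2)) * h₂

end RingPlane

theorem nonisotropic_bisector_distance_general (p : ℕ) (hp4 : p % 4 = 3)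
    (x z y w : ZMod (p ^ 3) × ZMod (p ^ 3))
    (hB : {v : ZMod (p ^ 3) × ZMod (p ^ 3) |
            (v.1 - x.1) ^ 2 + (v.2 - x.2) ^ 2 = (v.1 - z.1) ^ 2 + (v.2 - z.2) ^ 2} =
          {v : ZMod (p ^ 3) × ZMod (p ^ 3) |
            (v.1 - y.1) ^ 2 + (v.2 - y.2) ^ 2 = (v.1 - w.1) ^ 2 + (v.2 - w.2) ^ 2})
    (hiso : ∃ a b c : ZMod (p ^ 3), IsUnit a ∧ IsUnit b ∧ IsUnit (a ^ 2 + b ^ 2) ∧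
      {v : ZMod (p ^ 3) × ZMod (p ^ 3) |
        (v.1 - x.1) ^ 2 + (v.2 - x.2) ^ 2 = (v.1 - z.1) ^ 2 + (v.2 - z.2) ^ 2} =
        {v : ZMod (p ^ 3) × ZMod (p ^ 3) | a * v.1 + b * v.2 = c}) :
    (x.1 - y.1) ^ 2 + (x.2 - y.2) ^ 2 = (z.1 - w.1) ^ 2 + (z.2 - w.2) ^ 2 := by
  obtain ⟨a, b, c, ha, -, -, hline⟩ := hiso
  have h₂ : IsUnit (2 : ZMod (p ^ 3)) := by
    exact_mod_cast (ZMod.isUnit_iff_coprime 2 (p ^ 3)).mpr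
      (Nat.coprime_two_left.mpr (Nat.odd_iff.mpr (by omega)).pow)
  let := h₂.invertible
  exact RingPlane.quadNorm_sub_eq_of_perpBisector_eq_line ha hline (hB.symm.trans hline)

theorem nonisotropic_bisector_distance (p : ℕ) (hp : p.Prime) (hp4 : p % 4 = 3)
    (x z y w : ZMod (p ^ 3) × ZMod (p ^ 3))
    (hB : {v : ZMod (p ^ 3) × ZMod (p ^ 3) |
            (v.1 - x.1) ^ 2 + (v.2 - x.2) ^ 2 = (v.1 - z.1) ^ 2 + (v.2 - z.2) ^ 2} =
          {v : ZMod (p ^ 3) × ZMod (p ^ 3) |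
            (v.1 - y.1) ^ 2 + (v.2 - y.2) ^ 2 = (v.1 - w.1) ^ 2 + (v.2 - w.2) ^ 2})
    (hiso : ∃ a b c : ZMod (p ^ 3), IsUnit a ∧ IsUnit b ∧ IsUnit (a ^ 2 + b ^ 2) ∧
      {v : ZMod (p ^ 3) × ZMod (p ^ 3) |
        (v.1 - x.1) ^ 2 + (v.2 - x.2) ^ 2 = (v.1 - z.1) ^ 2 + (v.2 - z.2) ^ 2} =
        {v : ZMod (p ^ 3) × ZMod (p ^ 3) | a * v.1 + b * v.2 = c}) :
    (x.1 - y.1) ^ 2 + (x.2 - y.2) ^ 2 = (z.1 - w.1) ^ 2 + (z.2 - w.2) ^ 2 :=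
  nonisotropic_bisector_distance_general p hp4 x z y w hB hiso
end
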